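/- arXiv:1808.03076 — 7 statements merged into one kernel-verified Lean document; each statement's English description precedes it below -/
import Mathlib

section
/- A finite set of gambles D = {f₁, …, fₙ} on a finite outcome space Ω avoids sure loss if and only if there exists a probability mass function p on Ω such that for every i, Σ_{ω∈Ω} fᵢ(ω) p(ω) ≥ 0. -/
/-!
Write `M` for the matrix with rows `f i`. If some `p` in the standard simplex has `M p ≥ 0`, then
`λᵀ M p ≥ 0` for every `λ ≥ 0`, and an average of `λᵀ M` that is nonnegative forces a nonnegative
entry. Conversely, if the compact convex set `M(Δ)` misses the closed cone `ℝⁿ≥0`, Farkas' lemma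
gives a functional `λ ⬝ᵥ ·` nonnegative on the cone (so `λ ≥ 0`) and negative on every column
`M eω`, i.e. `λᵀ M < 0` everywhere.
-/

open Matrix

section
variable {𝕜 ι Ω : Type*} [Fintype Ω]

theorem exists_nonneg_of_mem_stdSimplex_of_dotProduct_nonneg [Semiring 𝕜] [LinearOrder 𝕜]
    [IsStrictOrderedRing 𝕜] {p g : Ω → 𝕜} (hp : p ∈ stdSimplex 𝕜 Ω) (hg : 0 ≤ g ⬝ᵥ p) :
    ∃ ω, 0 ≤ g ω := by
  by_contra! hneg
  obtain ⟨ω₀, -, hω₀⟩ : ∃ ω ∈ Finset.univ, (0 : 𝕜) < p ω :=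
    Finset.exists_lt_of_sum_lt (by simp [hp.2])
  have : g ⬝ᵥ p < 0 := by
    simpa [dotProduct] using
      Finset.sum_lt_sum (fun ω _ => mul_nonpos_of_nonpos_of_nonneg (hneg ω).le (hp.1 ω)) ⟨ω₀, Finset.mem_univ _, mul_neg_of_neg_of_pos (hneg ω₀) hω₀⟩
  exact this.not_ge hg

variable [Fintype ι]

theorem exists_vecMul_nonneg_of_mem_stdSimplex [Semiring 𝕜] [LinearOrder 𝕜]
    [IsStrictOrderedRing 𝕜] {M : Matrix ι Ω 𝕜} {p : Ω → 𝕜} (hp : p ∈ stdSimplex 𝕜 Ω)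
    (hMp : 0 ≤ M *ᵥ p) {lam : ι → 𝕜} (hlam : 0 ≤ lam) : ∃ ω, 0 ≤ (lam ᵥ* M) ω :=
  exists_nonneg_of_mem_stdSimplex_of_dotProduct_nonneg hp <| by
    rw [← dotProduct_mulVec]; exact dotProduct_nonneg_of_nonneg hlam hMp

theorem exists_mem_stdSimplex_mulVec_nonneg {M : Matrix ι Ω ℝ}
    (hM : ∀ lam : ι → ℝ, 0 ≤ lam → ∃ ω, 0 ≤ (lam ᵥ* M) ω) :
    ∃ p ∈ stdSimplex ℝ Ω, 0 ≤ M *ᵥ p := by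
  classical
  by_contra! h
  have hdisj : Disjoint (M.mulVecLin '' stdSimplex ℝ Ω) (ProperCone.positive ℝ (ι → ℝ)) := by
    rw [Set.disjoint_left]
    rintro _ ⟨p, hp, rfl⟩
    exact h p hp
  obtain ⟨g, hg_pos, hg_neg⟩ := (ProperCone.positive ℝ (ι → ℝ)).hyperplane_separation
    ((convex_stdSimplex ℝ Ω).linear_image _)
    ((isCompact_stdSimplex ℝ Ω).image (LinearMap.continuous_of_finiteDimensional _)) hdisj
  set lam : ι → ℝ := fun i => g (Pi.single i 1)
  have hg : ∀ y, g y = lam ⬝ᵥ y := by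
    intro y
    conv_lhs => rw [pi_eq_sum_univ' y]
    simp [lam, dotProduct, mul_comm]
  obtain ⟨ω, hω⟩ := hM lam fun i => hg_pos _ (Pi.single_nonneg.2 zero_le_one)
  refine (hg_neg _ ⟨_, single_mem_stdSimplex ℝ ω, rfl⟩).not_ge ?_
  rwa [hg, Matrix.mulVecLin_apply, dotProduct_mulVec, dotProduct_single_one]

theorem exists_mem_stdSimplex_mulVec_nonneg_iff (M : Matrix ι Ω ℝ) :
    (∃ p ∈ stdSimplex ℝ Ω, 0 ≤ M *ᵥ p) ↔ ∀ lam : ι → ℝ, 0 ≤ lam → ∃ ω, 0 ≤ (lam ᵥ* M) ω :=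
  ⟨fun ⟨_, hp, hMp⟩ _ hlam => exists_vecMul_nonneg_of_mem_stdSimplex hp hMp hlam,
    exists_mem_stdSimplex_mulVec_nonneg⟩

end

theorem avoids_sure_loss_iff_pmf_general {Ω : Type*} [Fintype Ω]
    (n : ℕ) (f : Fin n → Ω → ℝ) :
    (∀ lam : Fin n → ℝ, (∀ i, 0 ≤ lam i) →
      ∃ ω : Ω, 0 ≤ ∑ i, lam i * f i ω) ↔
    (∃ p : Ω → ℝ, (∀ ω, 0 ≤ p ω) ∧ (∑ ω, p ω = 1) ∧
      ∀ i, 0 ≤ ∑ ω, f i ω * p ω) := by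
  simpa [stdSimplex, Pi.le_def, and_assoc, mulVec, vecMul, dotProduct] using
    (exists_mem_stdSimplex_mulVec_nonneg_iff (Matrix.of f)).symm

theorem avoids_sure_loss_iff_pmf {Ω : Type*} [Fintype Ω] [Nonempty Ω]
    (n : ℕ) (f : Fin n → Ω → ℝ) :
    (∀ lam : Fin n → ℝ, (∀ i, 0 ≤ lam i) →
      ∃ ω : Ω, 0 ≤ ∑ i, lam i * f i ω) ↔
    (∃ p : Ω → ℝ, (∀ ω, 0 ≤ p ω) ∧ (∑ ω, p ω = 1) ∧
      ∀ i, 0 ≤ ∑ ω, f i ω * p ω) :=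
  avoids_sure_loss_iff_pmf_general n f
end

section
/- Fix ω₀ ∈ Ω. A finite set of gambles D = {f₁,…,fₙ} avoids sure loss if and only if there exists a function p : Ω∖{ω₀} → ℝ with p ≥ 0, Σ_{ω≠ω₀} p(ω) ≤ 1, and for every i, Σ_{ω≠ω₀} (fᵢ(ω₀) − fᵢ(ω)) p(ω) ≤ fᵢ(ω₀). -/
/-!
By Ville's theorem of the alternative (Hahn–Banach separation of the image of the probability
simplex under the gambles from the nonnegative orthant), avoiding sure loss is equivalent to the
existence of a probability mass function `q` under which every gamble has nonnegative expectation.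
Eliminating the mass at `ω₀` through `q ω₀ = 1 - ∑_{ω ≠ ω₀} q ω` rewrites `0 ≤ E_q fᵢ` as
`∑_{ω ≠ ω₀} (fᵢ ω₀ - fᵢ ω) q ω ≤ fᵢ ω₀`.
-/

open Finset Matrix

section Alternative

variable {ι Ω : Type*} [Fintype ι] [Fintype Ω]

theorem exists_dotProduct_le_of_mem_stdSimplex {q : Ω → ℝ} (hq : q ∈ stdSimplex ℝ Ω)
    (g : Ω → ℝ) : ∃ ω, g ⬝ᵥ q ≤ g ω := by
  have hΩ : (univ : Finset Ω).Nonempty := nonempty_of_sum_ne_zero (hq.2.symm ▸ one_ne_zero)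
  obtain ⟨ω, -, hω⟩ := exists_max_image univ g hΩ
  refine ⟨ω, ?_⟩
  calc g ⬝ᵥ q = ∑ ω', g ω' * q ω' := rfl
    _ ≤ ∑ ω', g ω * q ω' :=
      sum_le_sum fun ω' _ ↦ mul_le_mul_of_nonneg_right (hω ω' (mem_univ _)) (hq.1 ω')
    _ = g ω := by rw [← mul_sum, hq.2, mul_one]

theorem LinearMap.apply_eq_dotProduct_apply_single {R : Type*} [CommSemiring R] [DecidableEq ι]
    (φ : (ι → R) →ₗ[R] R) (x : ι → R) : φ x = x ⬝ᵥ fun i ↦ φ (Pi.single i 1) := by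
  conv_lhs => rw [← univ_sum_single x]
  refine (map_sum φ _ _).trans (sum_congr rfl fun i _ ↦ ?_)
  rw [← smul_eq_mul, ← map_smul, ← Pi.single_smul, smul_eq_mul, mul_one]

namespace Matrix

theorem exists_vecMul_nonneg_of_mulVec_nonneg (M : Matrix ι Ω ℝ) {q : Ω → ℝ}
    (hq : q ∈ stdSimplex ℝ Ω) (hMq : 0 ≤ M *ᵥ q) {lam : ι → ℝ} (hlam : 0 ≤ lam) :
    ∃ ω, 0 ≤ (lam ᵥ* M) ω := by
  obtain ⟨ω, hω⟩ := exists_dotProduct_le_of_mem_stdSimplex hq (lam ᵥ* M)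
  refine ⟨ω, le_trans ?_ hω⟩
  rw [← dotProduct_mulVec]
  exact dotProduct_nonneg_of_nonneg hlam hMq

theorem exists_mem_stdSimplex_mulVec_nonneg (M : Matrix ι Ω ℝ)
    (hM : ∀ lam : ι → ℝ, 0 ≤ lam → ∃ ω, 0 ≤ (lam ᵥ* M) ω) :
    ∃ q ∈ stdSimplex ℝ Ω, 0 ≤ M *ᵥ q := by
  classical
  by_contra! hneg
  have hdisj : Disjoint (M.mulVecLin '' stdSimplex ℝ Ω) (ProperCone.positive ℝ (ι → ℝ)) := by
    rw [Set.disjoint_left]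
    rintro _ ⟨q, hq, rfl⟩
    exact hneg q hq
  obtain ⟨φ, hφ_nonneg, hφ_neg⟩ := (ProperCone.positive ℝ (ι → ℝ)).hyperplane_separation
    ((convex_stdSimplex ℝ Ω).linear_image _)
    ((isCompact_stdSimplex ℝ Ω).image M.mulVecLin.continuous_of_finiteDimensional) hdisj
  set lam : ι → ℝ := fun i ↦ φ (Pi.single i 1)
  have hlam : 0 ≤ lam := fun i ↦ hφ_nonneg _ (Pi.single_nonneg.2 zero_le_one)
  obtain ⟨ω, hω⟩ := hM lam hlam
  have hφω : φ (M.col ω) < 0 := by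
    simpa only [mulVecLin_apply, mulVec_single_one] using
      hφ_neg _ ⟨_, single_mem_stdSimplex ℝ ω, rfl⟩
  rw [← ContinuousLinearMap.coe_coe, LinearMap.apply_eq_dotProduct_apply_single,
    dotProduct_comm] at hφω
  exact hφω.not_ge hω

theorem forall_exists_vecMul_nonneg_iff (M : Matrix ι Ω ℝ) :
    (∀ lam : ι → ℝ, 0 ≤ lam → ∃ ω, 0 ≤ (lam ᵥ* M) ω) ↔ ∃ q ∈ stdSimplex ℝ Ω, 0 ≤ M *ᵥ q :=
  ⟨M.exists_mem_stdSimplex_mulVec_nonneg, fun ⟨_, hq, hMq⟩ _ ↦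
    M.exists_vecMul_nonneg_of_mulVec_nonneg hq hMq⟩

end Matrix

end Alternative

section ReducedForm

variable {Ω R : Type*} [Fintype Ω] [DecidableEq Ω] [CommRing R] (ω₀ : Ω)

theorem sum_mul_eq_sub_sum_erase {g q : Ω → R} (hq : ∑ ω, q ω = 1) :
    ∑ ω, g ω * q ω = g ω₀ - ∑ ω ∈ univ.erase ω₀, (g ω₀ - g ω) * q ω := by
  have hq₀ : q ω₀ = 1 - ∑ ω ∈ univ.erase ω₀, q ω := by
    rw [← hq, ← add_sum_erase _ _ (mem_univ ω₀), add_sub_cancel_right]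
  simp only [sub_mul, sum_sub_distrib, ← mul_sum]
  rw [← add_sum_erase _ _ (mem_univ ω₀), hq₀]
  ring

theorem update_one_sub_sum_erase_mem_stdSimplex {p : Ω → ℝ} (hp : ∀ ω ≠ ω₀, 0 ≤ p ω)
    (hp₁ : ∑ ω ∈ univ.erase ω₀, p ω ≤ 1) :
    Function.update p ω₀ (1 - ∑ ω ∈ univ.erase ω₀, p ω) ∈ stdSimplex ℝ Ω := by
  refine ⟨fun ω ↦ ?_, ?_⟩
  · rcases eq_or_ne ω ω₀ with rfl | hω
    · simpa using hp₁
    · simpa [hω] using hp ω hω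
  · rw [← add_sum_erase _ _ (mem_univ ω₀), sum_update_of_notMem (notMem_erase ω₀ univ),
      Function.update_self, sub_add_cancel]

end ReducedForm

theorem avoids_sure_loss_iff_reduced_dual_general {Ω : Type*} [Fintype Ω] [DecidableEq Ω]
    (ω₀ : Ω) (n : ℕ) (f : Fin n → Ω → ℝ) :
    (∀ lam : Fin n → ℝ, (∀ i, 0 ≤ lam i) →
      ∃ ω : Ω, 0 ≤ ∑ i, lam i * f i ω) ↔
    (∃ p : Ω → ℝ, (∀ ω, 0 ≤ p ω) ∧
      (∑ ω ∈ Finset.univ.erase ω₀, p ω ≤ 1) ∧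
      ∀ i, ∑ ω ∈ Finset.univ.erase ω₀, (f i ω₀ - f i ω) * p ω ≤ f i ω₀) := by
  have hreduce {q : Ω → ℝ} (hq : ∑ ω, q ω = 1) (i : Fin n) :
      0 ≤ (of f *ᵥ q) i ↔ ∑ ω ∈ univ.erase ω₀, (f i ω₀ - f i ω) * q ω ≤ f i ω₀ := by
    change 0 ≤ ∑ ω, f i ω * q ω ↔ _
    rw [sum_mul_eq_sub_sum_erase ω₀ hq, sub_nonneg]
  refine (forall_exists_vecMul_nonneg_iff (of f)).trans ⟨?_, ?_⟩
  · rintro ⟨q, hq, hfq⟩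
    exact ⟨q, hq.1, (sum_le_univ_sum_of_nonneg hq.1).trans_eq hq.2,
      fun i ↦ (hreduce hq.2 i).1 (hfq i)⟩
  · rintro ⟨p, hp, hp₁, hpf⟩
    have hq := update_one_sub_sum_erase_mem_stdSimplex ω₀ (fun ω _ ↦ hp ω) hp₁
    refine ⟨_, hq, fun i ↦ (hreduce hq.2 i).2 ?_⟩
    refine (sum_congr rfl fun ω hω ↦ ?_).trans_le (hpf i)
    rw [Function.update_of_ne (ne_of_mem_erase hω)]

theorem avoids_sure_loss_iff_reduced_dual {Ω : Type*} [Fintype Ω] [DecidableEq Ω] [Nonempty Ω]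
    (ω₀ : Ω) (n : ℕ) (f : Fin n → Ω → ℝ) :
    (∀ lam : Fin n → ℝ, (∀ i, 0 ≤ lam i) →
      ∃ ω : Ω, 0 ≤ ∑ i, lam i * f i ω) ↔
    (∃ p : Ω → ℝ, (∀ ω, 0 ≤ p ω) ∧
      (∑ ω ∈ Finset.univ.erase ω₀, p ω ≤ 1) ∧
      ∀ i, ∑ ω ∈ Finset.univ.erase ω₀, (f i ω₀ - f i ω) * p ω ≤ f i ω₀) :=
  avoids_sure_loss_iff_reduced_dual_general ω₀ n f
end

section
/- Let D ⊆ L(Ω) be a set of gambles that avoids sure loss, and let g be a gamble. Then D ∪ {g − α} avoids sure loss if and only if α ≤ Ē_D(g), where Ē_D(g) := inf over n ∈ ℕ, nonnegative λ₁,…,λₙ, and f₁,…,fₙ ∈ D of max_{ω∈Ω} (g(ω) + Σᵢ λᵢ fᵢ(ω)). -/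
/-!
A combination of gambles from `D ∪ {g - α}` is `h + c • (g - α)` with `h` in the cone
`PointedCone.hull ℝ D` of combinations from `D` and `c ≥ 0`. For `c = 0` it is not a sure loss
because `D` avoids sure loss, and for `c > 0` rescaling by `c⁻¹` reduces it to `c = 1`, where
"not a sure loss" reads `α ≤ max (g + h)`. Over all `h` this is `α ≤ Ē_D(g)`; the infimum
defining `Ē_D(g)` is bounded below by `min g`, again because `D` avoids sure loss.
-/

/-- A set of gambles avoids sure loss. -/
def AvoidsSureLoss {Ω : Type*} [Fintype Ω] (D : Set (Ω → ℝ)) : Prop :=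
  ∀ (n : ℕ) (lam : Fin n → ℝ) (f : Fin n → Ω → ℝ),
    (∀ i, 0 ≤ lam i) → (∀ i, f i ∈ D) →
    ∃ ω : Ω, 0 ≤ ∑ i, lam i * f i ω

/-- Upper natural extension of `D` at `g`. -/
noncomputable def upperNatExt {Ω : Type*} [Fintype Ω] [Nonempty Ω]
    (D : Set (Ω → ℝ)) (g : Ω → ℝ) : ℝ :=
  sInf {x : ℝ | ∃ (n : ℕ) (lam : Fin n → ℝ) (f : Fin n → Ω → ℝ),
    (∀ i, 0 ≤ lam i) ∧ (∀ i, f i ∈ D) ∧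
    x = Finset.univ.sup' Finset.univ_nonempty
      (fun ω => g ω + ∑ i, lam i * f i ω)}

open Finset

namespace PointedCone

variable {R E : Type*} [Semiring R] [PartialOrder R] [IsOrderedRing R] [AddCommMonoid E]
  [Module R E] {s : Set E}

theorem mem_hull_iff_exists_fin {x : E} :
    x ∈ hull R s ↔ ∃ (n : ℕ) (c : Fin n → R) (v : Fin n → E),
      (∀ i, 0 ≤ c i) ∧ (∀ i, v i ∈ s) ∧ ∑ i, c i • v i = x := by
  rw [hull, Submodule.mem_span_set']
  constructor
  · rintro ⟨n, c, v, rfl⟩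
    exact ⟨n, fun i => c i, fun i => v i, fun i => (c i).2, fun i => (v i).2, by
      simp only [Nonneg.coe_smul]⟩
  · rintro ⟨n, c, v, hc, hv, rfl⟩
    exact ⟨n, fun i => ⟨c i, hc i⟩, fun i => ⟨v i, hv i⟩, by simp only [← Nonneg.coe_smul]⟩

theorem mem_hull_union_singleton {k x : E} :
    x ∈ hull R (s ∪ {k}) ↔ ∃ h ∈ hull R s, ∃ c : R, 0 ≤ c ∧ h + c • k = x := by
  simp only [hull, Submodule.span_union, Submodule.mem_sup, Submodule.mem_span_singleton]
  constructor
  · rintro ⟨h, hh, _, ⟨c, rfl⟩, rfl⟩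
    exact ⟨h, hh, c, c.2, by rw [Nonneg.coe_smul]⟩
  · rintro ⟨h, hh, c, hc, rfl⟩
    exact ⟨h, hh, _, ⟨⟨c, hc⟩, rfl⟩, by rw [← Nonneg.coe_smul]⟩

theorem forall_mem_hull_union_singleton {k : E} {P : E → Prop} :
    (∀ x ∈ hull R (s ∪ {k}), P x) ↔ ∀ h ∈ hull R s, ∀ c : R, 0 ≤ c → P (h + c • k) := by
  simp only [mem_hull_union_singleton]
  constructor
  · exact fun H h hh c hc => H _ ⟨h, hh, c, hc, rfl⟩
  · rintro H _ ⟨h, hh, c, hc, rfl⟩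
    exact H h hh c hc

end PointedCone

theorem forall_exists_nonneg_add_smul_iff {Ω : Type*} {C : PointedCone ℝ (Ω → ℝ)}
    (hC : ∀ h ∈ C, ∃ ω, 0 ≤ h ω) (k : Ω → ℝ) :
    (∀ h ∈ C, ∀ c : ℝ, 0 ≤ c → ∃ ω, 0 ≤ h ω + c * k ω) ↔ ∀ h ∈ C, ∃ ω, 0 ≤ h ω + k ω := by
  refine ⟨fun H h hh => by simpa using H h hh 1 zero_le_one, fun H h hh c hc => ?_⟩
  rcases hc.eq_or_lt with rfl | hc
  · simpa using hC h hh
  obtain ⟨ω, hω⟩ := H (c⁻¹ • h) (C.smul_mem (inv_nonneg.2 hc.le) hh)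
  refine ⟨ω, ?_⟩
  simpa [mul_add, hc.ne'] using mul_nonneg hc.le hω

section Gambles

variable {Ω : Type*} [Fintype Ω]

theorem avoidsSureLoss_iff_forall_mem_hull {D : Set (Ω → ℝ)} :
    AvoidsSureLoss D ↔ ∀ h ∈ PointedCone.hull ℝ D, ∃ ω, 0 ≤ h ω := by
  simp only [PointedCone.mem_hull_iff_exists_fin]
  constructor
  · rintro hD _ ⟨n, lam, f, hlam, hf, rfl⟩
    simpa [Finset.sum_apply] using hD n lam f hlam hf
  · intro hD n lam f hlam hf
    simpa [Finset.sum_apply] using hD _ ⟨n, lam, f, hlam, hf, rfl⟩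

variable [Nonempty Ω]

theorem upperNatExt_eq_sInf_image (D : Set (Ω → ℝ)) (g : Ω → ℝ) :
    upperNatExt D g =
      sInf ((fun h => univ.sup' univ_nonempty (g + h)) '' PointedCone.hull ℝ D) := by
  rw [upperNatExt]
  congr 1
  ext x
  simp only [Set.mem_image, SetLike.mem_coe, PointedCone.mem_hull_iff_exists_fin,
    Set.mem_ofPred_eq]
  constructor
  · rintro ⟨n, lam, f, hlam, hf, rfl⟩
    exact ⟨_, ⟨n, lam, f, hlam, hf, rfl⟩, by simp [Finset.sum_apply]⟩
  · rintro ⟨_, ⟨n, lam, f, hlam, hf, rfl⟩, rfl⟩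
    exact ⟨n, lam, f, hlam, hf, by simp [Finset.sum_apply]⟩

theorem le_sInf_image_sup'_iff {C : PointedCone ℝ (Ω → ℝ)} (hC : ∀ h ∈ C, ∃ ω, 0 ≤ h ω)
    (g : Ω → ℝ) (α : ℝ) :
    α ≤ sInf ((fun h => univ.sup' univ_nonempty (g + h)) '' C) ↔
      ∀ h ∈ C, ∃ ω, α ≤ g ω + h ω := by
  have hbdd : BddBelow ((fun h => univ.sup' univ_nonempty (g + h)) '' C) := by
    refine ⟨univ.inf' univ_nonempty g, Set.forall_mem_image.2 fun h hh => ?_⟩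
    obtain ⟨ω, hω⟩ := hC h hh
    exact (inf'_le g (mem_univ ω)).trans <|
      (le_add_of_nonneg_right hω).trans (le_sup' (g + h) (mem_univ ω))
  rw [le_csInf_iff hbdd (Set.image_nonempty.2 ⟨0, C.zero_mem⟩), Set.forall_mem_image]
  simp only [le_sup'_iff, mem_univ, true_and, Pi.add_apply, SetLike.mem_coe]

end Gambles

theorem asl_union_iff_le_upperNatExt {Ω : Type*} [Fintype Ω] [Nonempty Ω]
    (D : Set (Ω → ℝ)) (hD : AvoidsSureLoss D) (g : Ω → ℝ) (α : ℝ) :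
    AvoidsSureLoss (D ∪ {fun ω => g ω - α}) ↔ α ≤ upperNatExt D g := by
  rw [avoidsSureLoss_iff_forall_mem_hull] at hD ⊢
  rw [upperNatExt_eq_sInf_image, le_sInf_image_sup'_iff hD]
  simp only [PointedCone.forall_mem_hull_union_singleton, Pi.add_apply, Pi.smul_apply,
    smul_eq_mul]
  rw [forall_exists_nonneg_add_smul_iff hD]
  refine forall₂_congr fun h _ => exists_congr fun ω => ?_
  constructor <;> intro <;> linarith
end

section
/- For any set of gambles D avoiding sure loss and any gamble g, if α > Ē_D(g) (the upper natural extension of g with respect to D), then D ∪ {g − α} does not avoid sure loss. -/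
theorem not_asl_of_gt_upperNatExt {Ω : Type*} [Fintype Ω] [Nonempty Ω]
    (D : Set (Ω → ℝ)) (hD : AvoidsSureLoss D) (g : Ω → ℝ) (α : ℝ)
    (hα : upperNatExt D g < α) :
    ¬ AvoidsSureLoss (D ∪ {fun ω => g ω - α}) := by
  -- The defining set is nonempty (take n = 0).
  have hne : {x : ℝ | ∃ (n : ℕ) (lam : Fin n → ℝ) (f : Fin n → Ω → ℝ),
      (∀ i, 0 ≤ lam i) ∧ (∀ i, f i ∈ D) ∧
      x = Finset.univ.sup' Finset.univ_nonempty
        (fun ω => g ω + ∑ i, lam i * f i ω)}.Nonempty := by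
    exact ⟨Finset.univ.sup' Finset.univ_nonempty
      (fun ω => g ω + ∑ i : Fin 0, (Fin.elim0 i : ℝ) * (Fin.elim0 i : Ω → ℝ) ω),
      0, Fin.elim0, Fin.elim0, fun i => i.elim0, fun i => i.elim0, rfl⟩
  obtain ⟨x, hx, hxα⟩ := exists_lt_of_csInf_lt hne hα
  obtain ⟨n, lam, f, hlam, hf, hxeq⟩ := hx
  intro h
  obtain ⟨ω, hω⟩ := h (n + 1) (Fin.cons 1 lam) (Fin.cons (fun ω => g ω - α) f)
    (by
      intro i
      refine Fin.cases ?_ ?_ i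
      · simp
      · intro j; simpa using hlam j)
    (by
      intro i
      refine Fin.cases ?_ ?_ i
      · right; rfl
      · intro j; left; exact hf j)
  rw [Fin.sum_univ_succ] at hω
  simp only [Fin.cons_zero, Fin.cons_succ, one_mul] at hω
  have hle : g ω + ∑ i, lam i * f i ω ≤ x := by
    rw [hxeq]
    exact Finset.le_sup' (fun ω => g ω + ∑ i, lam i * f i ω) (Finset.mem_univ ω)
  linarith
end

section
/- Let P be a self-conjugate lower prevision (a prevision) on a domain closed under negation. Then P is coherent if and only if P avoids sure loss. -/
/-!
Coherence always implies avoiding sure loss: take `λ₀ = 0` (and, for the empty combination, any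
`ω`). Conversely, on a domain closed under negation the subtracted term `λ₀ (f₀ - P f₀)` of a
coherence combination is the term `λ₀ ((-f₀) - P (-f₀))` of an ordinary combination, because
`P (-f₀) = -P f₀`; so sure loss avoidance for the extended combination gives coherence.
-/

namespace LowerPrevision

variable {Ω : Type*} (K : Set (Ω → ℝ)) (P : (Ω → ℝ) → ℝ)

def AvoidsSureLoss : Prop :=
  ∀ (n : ℕ) (lam : Fin n → ℝ) (f : Fin n → Ω → ℝ),
    (∀ i, 0 ≤ lam i) → (∀ i, f i ∈ K) → ∃ ω : Ω, 0 ≤ ∑ i, lam i * (f i ω - P (f i))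

def IsCoherent : Prop :=
  ∀ (n : ℕ) (lam : Fin n → ℝ) (lam0 : ℝ) (f : Fin n → Ω → ℝ) (f0 : Ω → ℝ),
    (∀ i, 0 ≤ lam i) → 0 ≤ lam0 → (∀ i, f i ∈ K) → f0 ∈ K →
    ∃ ω : Ω, 0 ≤ (∑ i, lam i * (f i ω - P (f i))) - lam0 * (f0 ω - P f0)

variable {K P}

theorem IsCoherent.avoidsSureLoss [Nonempty Ω] (h : IsCoherent K P) : AvoidsSureLoss K P := by
  intro n lam f hlam hf
  cases n with
  | zero => exact ⟨Classical.arbitrary Ω, by simp⟩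
  | succ m =>
    obtain ⟨ω, hω⟩ := h (m + 1) lam 0 f (f 0) hlam le_rfl hf (hf 0)
    exact ⟨ω, by simpa using hω⟩

theorem AvoidsSureLoss.isCoherent (hKneg : ∀ f ∈ K, -f ∈ K) (hconj : ∀ f ∈ K, P f = -P (-f))
    (h : AvoidsSureLoss K P) : IsCoherent K P := by
  intro n lam lam0 f f0 hlam hlam0 hf hf0
  have hlam' : ∀ i, 0 ≤ Fin.snoc (α := fun _ ↦ ℝ) lam lam0 i :=
    Fin.forall_fin_succ'.2 ⟨by simpa using hlam, by simpa using hlam0⟩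
  have hf' : ∀ i, Fin.snoc (α := fun _ ↦ Ω → ℝ) f (-f0) i ∈ K :=
    Fin.forall_fin_succ'.2 ⟨by simpa using hf, by simpa using hKneg f0 hf0⟩
  obtain ⟨ω, hω⟩ := h (n + 1) _ _ hlam' hf'
  have hneg : P (-f0) = -P f0 := by rw [hconj f0 hf0, neg_neg]
  refine ⟨ω, hω.trans_eq ?_⟩
  simp only [Fin.sum_univ_castSucc, Fin.snoc_castSucc, Fin.snoc_last, Pi.neg_apply, hneg]
  ring

end LowerPrevision

theorem prevision_coherent_iff_asl_general {Ω : Type*} [Nonempty Ω]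
    (K : Set (Ω → ℝ)) (P : (Ω → ℝ) → ℝ)
    (hKneg : ∀ f ∈ K, -f ∈ K)
    (hconj : ∀ f ∈ K, P f = -P (-f)) :
    (∀ (n : ℕ) (lam : Fin n → ℝ) (lam0 : ℝ) (f : Fin n → Ω → ℝ) (f0 : Ω → ℝ),
        (∀ i, 0 ≤ lam i) → 0 ≤ lam0 → (∀ i, f i ∈ K) → f0 ∈ K →
        ∃ ω : Ω, 0 ≤ (∑ i, lam i * (f i ω - P (f i))) - lam0 * (f0 ω - P f0)) ↔
    (∀ (n : ℕ) (lam : Fin n → ℝ) (f : Fin n → Ω → ℝ),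
        (∀ i, 0 ≤ lam i) → (∀ i, f i ∈ K) →
        ∃ ω : Ω, 0 ≤ ∑ i, lam i * (f i ω - P (f i))) :=
  ⟨LowerPrevision.IsCoherent.avoidsSureLoss,
    LowerPrevision.AvoidsSureLoss.isCoherent hKneg hconj⟩

theorem prevision_coherent_iff_asl {Ω : Type*} [Fintype Ω] [Nonempty Ω]
    (K : Set (Ω → ℝ)) (P : (Ω → ℝ) → ℝ)
    (hKneg : ∀ f ∈ K, -f ∈ K)
    (hconj : ∀ f ∈ K, P f = -P (-f)) :
    (∀ (n : ℕ) (lam : Fin n → ℝ) (lam0 : ℝ) (f : Fin n → Ω → ℝ) (f0 : Ω → ℝ),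
        (∀ i, 0 ≤ lam i) → 0 ≤ lam0 → (∀ i, f i ∈ K) → f0 ∈ K →
        ∃ ω : Ω, 0 ≤ (∑ i, lam i * (f i ω - P (f i))) - lam0 * (f0 ω - P f0)) ↔
    (∀ (n : ℕ) (lam : Fin n → ℝ) (f : Fin n → Ω → ℝ),
        (∀ i, 0 ≤ lam i) → (∀ i, f i ∈ K) →
        ∃ ω : Ω, 0 ≤ ∑ i, lam i * (f i ω - P (f i))) :=
  prevision_coherent_iff_asl_general K P hKneg hconj
end

section
/- If all lower previsions in a nonempty collection Γ with common domain K are coherent, then the lower envelope Q̲(f) := inf_{P̲ ∈ Γ} P̲(f) is also coherent (assuming the infimum is finite for each f ∈ K). -/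
/-- Coherence of a lower prevision `P` with domain `K`. -/
def Coherent {Ω : Type*} [Fintype Ω] (K : Set (Ω → ℝ)) (P : (Ω → ℝ) → ℝ) : Prop :=
  ∀ (n : ℕ) (lam : Fin n → ℝ) (lam0 : ℝ) (f : Fin n → Ω → ℝ) (f0 : Ω → ℝ),
    (∀ i, 0 ≤ lam i) → 0 ≤ lam0 → (∀ i, f i ∈ K) → f0 ∈ K →
    ∃ ω : Ω, 0 ≤ (∑ i, lam i * (f i ω - P (f i))) - lam0 * (f0 ω - P f0)

/-! The lower envelope `Q` lies below every `P ∈ Γ`, which only helps on the gambles `fᵢ` that are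
bought at price `Q fᵢ`. On the gamble `f₀` sold at price `Q f₀` it hurts, but `Q f₀` is approached
by the `P f₀`, and since `Ω` is finite a single maximizer of the remaining payoff works for all
`P` at once. -/

theorem Coherent.exists_nonneg_of_le {Ω : Type*} [Fintype Ω] {K : Set (Ω → ℝ)}
    {P : (Ω → ℝ) → ℝ} (hP : Coherent K P) (Q : (Ω → ℝ) → ℝ) {n : ℕ} {lam : Fin n → ℝ}
    {lam0 : ℝ} {f : Fin n → Ω → ℝ} {f0 : Ω → ℝ} (hlam : ∀ i, 0 ≤ lam i) (hlam0 : 0 ≤ lam0)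
    (hf : ∀ i, f i ∈ K) (hf0 : f0 ∈ K) (hQP : ∀ i, Q (f i) ≤ P (f i)) :
    ∃ ω, 0 ≤ (∑ i, lam i * (f i ω - Q (f i))) - lam0 * (f0 ω - P f0) := by
  obtain ⟨ω, hω⟩ := hP n lam lam0 f f0 hlam hlam0 hf hf0
  refine ⟨ω, hω.trans (sub_le_sub_right (Finset.sum_le_sum fun i _ => ?_) _)⟩
  exact mul_le_mul_of_nonneg_left (sub_le_sub_left (hQP i) _) (hlam i)

open scoped Pointwise in
theorem exists_nonneg_add_mul_sInf {Ω : Type*} [Finite Ω] [Nonempty Ω] (S : Ω → ℝ) {c : ℝ}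
    (hc : 0 ≤ c) {A : Set ℝ} (hA : A.Nonempty) (hS : ∀ a ∈ A, ∃ ω, 0 ≤ S ω + c * a) :
    ∃ ω, 0 ≤ S ω + c * sInf A := by
  obtain ⟨ωmax, hmax⟩ := Finite.exists_max S
  refine ⟨ωmax, ?_⟩
  have hbound : -S ωmax ≤ sInf (c • A) := by
    refine le_csInf hA.smul_set ?_
    rintro _ ⟨a, ha, rfl⟩
    obtain ⟨ω, hω⟩ := hS a ha
    show -S ωmax ≤ c * a
    linarith [hmax ω]
  rw [Real.sInf_smul_of_nonneg hc, smul_eq_mul] at hbound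
  linarith

theorem lower_envelope_coherent {Ω : Type*} [Fintype Ω] [Nonempty Ω]
    (K : Set (Ω → ℝ)) (Γ : Set ((Ω → ℝ) → ℝ)) (hΓ : Γ.Nonempty)
    (hcoh : ∀ P ∈ Γ, Coherent K P)
    (hbdd : ∀ f ∈ K, BddBelow ((fun P => P f) '' Γ))
    (Q : (Ω → ℝ) → ℝ)
    (hQ : ∀ f ∈ K, Q f = sInf ((fun P => P f) '' Γ)) :
    Coherent K Q := by
  intro n lam lam0 f f0 hlam hlam0 hf hf0
  have hQle : ∀ P ∈ Γ, ∀ i, Q (f i) ≤ P (f i) := fun P hP i => by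
    rw [hQ (f i) (hf i)]
    exact csInf_le (hbdd (f i) (hf i)) ⟨P, hP, rfl⟩
  obtain ⟨ω, hω⟩ := exists_nonneg_add_mul_sInf
    (fun ω => (∑ i, lam i * (f i ω - Q (f i))) - lam0 * f0 ω) hlam0 (hΓ.image fun P => P f0) (by
      rintro _ ⟨P, hP, rfl⟩
      obtain ⟨ω, hω⟩ := (hcoh P hP).exists_nonneg_of_le Q hlam hlam0 hf hf0 (hQle P hP)
      exact ⟨ω, by linarith⟩)
  exact ⟨ω, by rw [hQ f0 hf0]; linarith⟩
end

section
/- Let D be a finite set of gambles avoiding sure loss, and for a gamble g let β* be the optimal value of the LP: minimize β subject to Σᵢ λᵢ fᵢ(ω) − β ≤ −g(ω) for all ω ∈ Ω, λᵢ ≥ 0 (β free). Then for any δ > 0, the set D ∪ {g − β* − δ} does not avoid sure loss. -/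
theorem adding_below_upper_ext_loses_general {Ω : Type*} [Fintype Ω] [Nonempty Ω]
    (n : ℕ) (f : Fin n → Ω → ℝ)
    (g : Ω → ℝ) (β : ℝ)
    (hβatt : ∃ lam : Fin n → ℝ, (∀ i, 0 ≤ lam i) ∧
      Finset.univ.sup' Finset.univ_nonempty
        (fun ω => g ω + ∑ i, lam i * f i ω) = β)
    (δ : ℝ) (hδ : 0 < δ) :
    ∃ (μ₀ : ℝ) (μ : Fin n → ℝ), 0 ≤ μ₀ ∧ (∀ i, 0 ≤ μ i) ∧
      ∀ ω : Ω, μ₀ * (g ω - β - δ) + ∑ i, μ i * f i ω < 0 := by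
  obtain ⟨lam, hlam, hsup⟩ := hβatt
  refine ⟨1, lam, zero_le_one, hlam, fun ω => ?_⟩
  have hle : g ω + ∑ i, lam i * f i ω ≤ β :=
    hsup ▸ Finset.le_sup' (fun ω => g ω + ∑ i, lam i * f i ω) (Finset.mem_univ ω)
  linarith

theorem adding_below_upper_ext_loses {Ω : Type*} [Fintype Ω] [Nonempty Ω]
    (n : ℕ) (f : Fin n → Ω → ℝ)
    (hASL : ∀ lam : Fin n → ℝ, (∀ i, 0 ≤ lam i) →
      ∃ ω : Ω, 0 ≤ ∑ i, lam i * f i ω)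
    (g : Ω → ℝ) (β : ℝ)
    (hβlb : ∀ lam : Fin n → ℝ, (∀ i, 0 ≤ lam i) →
      β ≤ Finset.univ.sup' Finset.univ_nonempty
        (fun ω => g ω + ∑ i, lam i * f i ω))
    (hβatt : ∃ lam : Fin n → ℝ, (∀ i, 0 ≤ lam i) ∧
      Finset.univ.sup' Finset.univ_nonempty
        (fun ω => g ω + ∑ i, lam i * f i ω) = β)
    (δ : ℝ) (hδ : 0 < δ) :
    ∃ (μ₀ : ℝ) (μ : Fin n → ℝ), 0 ≤ μ₀ ∧ (∀ i, 0 ≤ μ i) ∧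
      ∀ ω : Ω, μ₀ * (g ω - β - δ) + ∑ i, μ i * f i ω < 0 :=
  adding_below_upper_ext_loses_general n f g β hβatt δ hδ
end
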